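/- For all natural numbers k, l and every real number m > −1 there exists a polynomial P in two variables with nonnegative real coefficients (depending only on k, l, m) such that for all real numbers a₀, a₁, b, c, K, L with 0 ≤ a₀ ≤ a₁, a₁ > 0, b ≥ 0, K ≥ 0, L > 0 and c ≥ b, one has ∫_{a₀}^{a₁} max(x,b)^m · (ln₊(K/x))^k · (ln₊(x/L))^l dx ≤ max(c,a₁)^{m+1} · P( ln₊(K/max(c,a₁)), ln₊(a₁/L) ). -/

import Mathlib

/-!
Put `μ = min m 0` and `M = max c a₁`. On `(a₀, a₁]` we have `max x b ^ m ≤ M ^ (m - μ) * x ^ μ`,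
`ln₊ (x / L) ≤ ln₊ (a₁ / L)` and, since `log t ≤ t ^ ε / ε`,
`ln₊ (K / x) ≤ ln₊ (K / M) + log (M / x) ≤ (ln₊ (K / M) + ε⁻¹) * (M / x) ^ ε`.
So the integrand is at most a constant times `x ^ (μ - k ε)`, which is integrable at `0`; with
`ε = (μ + 1) / (k + 1)` the exponent satisfies `μ - k ε + 1 = ε`, and integrating yields
`M ^ (m + 1) * ε⁻¹ * (ln₊ (K / M) + ε⁻¹) ^ k * ln₊ (a₁ / L) ^ l`.
-/

/-- The positive part of the logarithm: `ln₊ x = log (max x 1)`. -/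
noncomputable def lnp (x : ℝ) : ℝ := Real.log (max x 1)

open MvPolynomial

def nonnegCoeffs (σ R : Type*) [CommSemiring R] [PartialOrder R] [IsOrderedRing R] :
    Subsemiring (MvPolynomial σ R) where
  carrier := {p | ∀ d, 0 ≤ p.coeff d}
  mul_mem' hp hq d := by
    classical
    rw [coeff_mul]
    exact Finset.sum_nonneg fun _ _ => mul_nonneg (hp _) (hq _)
  one_mem' d := by
    classical
    rw [coeff_one]
    split_ifs <;> simp
  add_mem' hp hq d := by
    rw [coeff_add]
    exact add_nonneg (hp d) (hq d)
  zero_mem' d := by simp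

section nonnegCoeffs

variable {σ R : Type*} [CommSemiring R] [PartialOrder R] [IsOrderedRing R]

theorem mem_nonnegCoeffs {p : MvPolynomial σ R} : p ∈ nonnegCoeffs σ R ↔ ∀ d, 0 ≤ p.coeff d :=
  Iff.rfl

theorem C_mem_nonnegCoeffs {a : R} (ha : 0 ≤ a) : C a ∈ nonnegCoeffs σ R := fun d => by
  classical
  rw [coeff_C]
  split_ifs <;> simp [ha]

theorem X_mem_nonnegCoeffs (i : σ) : X i ∈ nonnegCoeffs σ R := fun d => by
  classical
  rw [coeff_X]
  split_ifs <;> simp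

end nonnegCoeffs

lemma lnp_nonneg (x : ℝ) : 0 ≤ lnp x := Real.log_nonneg (le_max_right _ _)

lemma lnp_mono : Monotone lnp := fun _ _ h =>
  Real.log_le_log (one_pos.trans_le (le_max_right _ _)) (max_le_max_right 1 h)

lemma lnp_div_le_lnp_div_add_log {K x M : ℝ} (hx : 0 < x) (hxM : x ≤ M) :
    lnp (K / x) ≤ lnp (K / M) + Real.log (M / x) := by
  have hM : 0 < M := hx.trans_le hxM
  have hmax : max (K / x) 1 ≤ max (K / M) 1 * (M / x) := by
    refine max_le ?_ (one_le_mul_of_one_le_of_one_le (le_max_right _ _) ((one_le_div hx).2 hxM))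
    calc K / x = K / M * (M / x) := by field_simp
      _ ≤ max (K / M) 1 * (M / x) := by gcongr; exact le_max_left _ _
  calc lnp (K / x) ≤ Real.log (max (K / M) 1 * (M / x)) :=
        Real.log_le_log (by positivity) hmax
    _ = lnp (K / M) + Real.log (M / x) := Real.log_mul (by positivity) (by positivity)

lemma lnp_div_le_mul_rpow {K x M ε : ℝ} (hx : 0 < x) (hxM : x ≤ M) (hε : 0 < ε) :
    lnp (K / x) ≤ (lnp (K / M) + ε⁻¹) * (M / x) ^ ε := by
  have hMx : 1 ≤ M / x := (one_le_div hx).2 hxM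
  calc lnp (K / x) ≤ lnp (K / M) + Real.log (M / x) := lnp_div_le_lnp_div_add_log hx hxM
    _ ≤ lnp (K / M) * (M / x) ^ ε + (M / x) ^ ε / ε :=
        add_le_add (le_mul_of_one_le_right (lnp_nonneg _) (Real.one_le_rpow hMx hε.le))
          (Real.log_le_rpow_div (zero_le_one.trans hMx) hε)
    _ = (lnp (K / M) + ε⁻¹) * (M / x) ^ ε := by ring

lemma rpow_le_rpow_mul_rpow {x y M m μ : ℝ} (hx : 0 < x) (hxy : x ≤ y) (hyM : y ≤ M)
    (hμ : μ ≤ 0) (hμm : μ ≤ m) : y ^ m ≤ M ^ (m - μ) * x ^ μ := by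
  have hy := hx.trans_le hxy
  calc y ^ m = y ^ (m - μ) * y ^ μ := by rw [← Real.rpow_add hy, sub_add_cancel]
    _ ≤ M ^ (m - μ) * x ^ μ :=
        mul_le_mul (Real.rpow_le_rpow hy.le hyM (sub_nonneg.2 hμm))
          (Real.rpow_le_rpow_of_nonpos hx hxy hμ) (by positivity)
          (Real.rpow_nonneg (hy.le.trans hyM) _)

lemma integral_rpow_le {a₀ a₁ M ν : ℝ} (ha₀ : 0 ≤ a₀) (h01 : a₀ ≤ a₁) (ha₁M : a₁ ≤ M)
    (hν : -1 < ν) : ∫ x in a₀..a₁, x ^ ν ≤ M ^ (ν + 1) / (ν + 1) := by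
  have hν1 : 0 < ν + 1 := by linarith
  rw [integral_rpow (Or.inl hν)]
  gcongr
  have := Real.rpow_nonneg ha₀ (ν + 1)
  have := Real.rpow_le_rpow (ha₀.trans h01) ha₁M hν1.le
  linarith

lemma max_rpow_mul_lnp_pow_le {m μ ε b K L M a₁ x : ℝ} (k l : ℕ) (hμ : μ ≤ 0) (hμm : μ ≤ m)
    (hε : 0 < ε) (hL : 0 < L) (hbM : b ≤ M) (hx : 0 < x) (hxa₁ : x ≤ a₁)
    (ha₁M : a₁ ≤ M) :
    max x b ^ m * lnp (K / x) ^ k * lnp (x / L) ^ l ≤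
      M ^ (m - (μ - k * ε)) * (lnp (K / M) + ε⁻¹) ^ k * lnp (a₁ / L) ^ l * x ^ (μ - k * ε) := by
  have hxM := hxa₁.trans ha₁M
  have hM := hx.trans_le hxM
  have hmax : max x b ^ m ≤ M ^ (m - μ) * x ^ μ :=
    rpow_le_rpow_mul_rpow hx (le_max_left _ _) (max_le hxM hbM) hμ hμm
  have hKx : lnp (K / x) ^ k ≤ (lnp (K / M) + ε⁻¹) ^ k * (M / x) ^ (k * ε) := by
    calc lnp (K / x) ^ k ≤ ((lnp (K / M) + ε⁻¹) * (M / x) ^ ε) ^ k :=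
          pow_le_pow_left₀ (lnp_nonneg _) (lnp_div_le_mul_rpow hx hxM hε) k
      _ = _ := by rw [mul_pow, ← Real.rpow_mul_natCast (by positivity), mul_comm ε]
  have hLx : lnp (x / L) ^ l ≤ lnp (a₁ / L) ^ l :=
    pow_le_pow_left₀ (lnp_nonneg _) (lnp_mono (div_le_div_of_nonneg_right hxa₁ hL.le)) l
  have hA : 0 ≤ lnp (K / M) + ε⁻¹ := add_nonneg (lnp_nonneg _) (by positivity)
  calc max x b ^ m * lnp (K / x) ^ k * lnp (x / L) ^ l
      ≤ M ^ (m - μ) * x ^ μ * ((lnp (K / M) + ε⁻¹) ^ k * (M / x) ^ (k * ε)) *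
          lnp (a₁ / L) ^ l := by
        gcongr
        all_goals exact pow_nonneg (lnp_nonneg _) _
    _ = _ := by
        rw [show m - (μ - k * ε) = m - μ + k * ε by ring, Real.rpow_add hM, Real.rpow_sub hx,
          Real.div_rpow hM.le hx.le]
        field_simp

lemma integral_max_rpow_mul_lnp_pow_le {m μ ε b K L M a₀ a₁ : ℝ} (k l : ℕ) (hμ : μ ≤ 0)
    (hμm : μ ≤ m) (hε : 0 < ε) (hν : -1 < μ - k * ε) (hL : 0 < L) (hbM : b ≤ M) (hb : 0 ≤ b)
    (ha₀ : 0 ≤ a₀) (h01 : a₀ ≤ a₁) (ha₁M : a₁ ≤ M) :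
    ∫ x in a₀..a₁, max x b ^ m * lnp (K / x) ^ k * lnp (x / L) ^ l ≤
      M ^ (m - (μ - k * ε)) * (lnp (K / M) + ε⁻¹) ^ k * lnp (a₁ / L) ^ l *
        (M ^ (μ - k * ε + 1) / (μ - k * ε + 1)) := by
  have hM : 0 ≤ M := hb.trans hbM
  set C := M ^ (m - (μ - k * ε)) * (lnp (K / M) + ε⁻¹) ^ k * lnp (a₁ / L) ^ l
  calc ∫ x in a₀..a₁, max x b ^ m * lnp (K / x) ^ k * lnp (x / L) ^ l
      ≤ ∫ x in a₀..a₁, C * x ^ (μ - k * ε) := by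
        rw [intervalIntegral.integral_of_le h01, intervalIntegral.integral_of_le h01]
        refine MeasureTheory.setIntegral_mono_of_nonneg (fun x _ => ?_)
          (fun x ⟨hx, hxa₁⟩ => ?_) ?_
        · exact mul_nonneg (mul_nonneg (Real.rpow_nonneg (le_max_of_le_right hb) _)
            (pow_nonneg (lnp_nonneg _) _)) (pow_nonneg (lnp_nonneg _) _)
        · exact max_rpow_mul_lnp_pow_le k l hμ hμm hε hL hbM (ha₀.trans_lt hx) hxa₁ ha₁M
        · exact ((intervalIntegral.intervalIntegrable_rpow' hν).const_mul _).1
    _ = C * ∫ x in a₀..a₁, x ^ (μ - k * ε) := intervalIntegral.integral_const_mul _ _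
    _ ≤ C * (M ^ (μ - k * ε + 1) / (μ - k * ε + 1)) := by
        have hC : 0 ≤ C := mul_nonneg (mul_nonneg (by positivity)
          (pow_nonneg (add_nonneg (lnp_nonneg _) (by positivity)) _)) (pow_nonneg (lnp_nonneg _) _)
        gcongr
        exact integral_rpow_le ha₀ h01 ha₁M hν

theorem stmt4 (k l : ℕ) (m : ℝ) (hm : -1 < m) :
    ∃ P : MvPolynomial (Fin 2) ℝ, (∀ d, 0 ≤ P.coeff d) ∧
      ∀ a₀ a₁ b c K L : ℝ, 0 ≤ a₀ → a₀ ≤ a₁ → 0 < a₁ → 0 ≤ b → 0 ≤ K → 0 < L → b ≤ c →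
        ∫ x in a₀..a₁, max x b ^ m * lnp (K / x) ^ k * lnp (x / L) ^ l ≤
          max c a₁ ^ (m + 1) *
            MvPolynomial.eval ![lnp (K / max c a₁), lnp (a₁ / L)] P := by
  set μ := min m 0
  have hμ : -1 < μ := lt_min hm (by norm_num)
  set ε := (μ + 1) / (k + 1)
  have hε : 0 < ε := div_pos (by linarith) (by positivity)
  have hν : μ - k * ε + 1 = ε := by simp only [ε]; field_simp; ring
  refine ⟨C ε⁻¹ * (X 0 + C ε⁻¹) ^ k * X 1 ^ l, mem_nonnegCoeffs.1 ?_, ?_⟩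
  · have hε' := C_mem_nonnegCoeffs (σ := Fin 2) (inv_nonneg.2 hε.le)
    exact mul_mem (mul_mem hε' (pow_mem (add_mem (X_mem_nonnegCoeffs 0) hε') k))
      (pow_mem (X_mem_nonnegCoeffs 1) l)
  intro a₀ a₁ b c K L ha₀ h01 ha₁ hb _ hL hbc
  have hM : 0 < max c a₁ := ha₁.trans_le (le_max_right _ _)
  refine (integral_max_rpow_mul_lnp_pow_le k l (min_le_right m 0) (min_le_left m 0) hε
    (by linarith) hL (hbc.trans (le_max_left _ _)) hb ha₀ h01 (le_max_right _ _)).trans_eq ?_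
  rw [hν, show m - (μ - k * ε) = m + 1 - ε by linarith, Real.rpow_sub hM]
  simp only [map_mul, map_pow, map_add, eval_C, eval_X, Matrix.cons_val_zero,
    Matrix.cons_val_one, Matrix.cons_val_fin_one]
  field_simp
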